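/- arXiv:2512.02734 — 2 statements merged into one kernel-verified Lean document; each statement's English description precedes it below -/
import Mathlib

section
/- Let m, n ≥ 2 and let P be the m×n monic symmetric biquadratic form with parameters a, b, c ∈ ℝ. Then P(x,y) ≥ 0 for all x ∈ ℝ^m, y ∈ ℝ^n if and only if the four linear inequalities hold: (i) 1 − b + (m−1)(a−c) ≥ 0; (ii) 1 − a + (n−1)(b−c) ≥ 0; (iii) 1 − a − b + c ≥ 0; (iv) 1 + (m−1)a + (n−1)b + (m−1)(n−1)c ≥ 0. -/
open Finset

noncomputable def monicForm (m n : ℕ) (a b c : ℝ) (x : Fin m → ℝ) (y : Fin n → ℝ) : ℝ :=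
  (∑ i, ∑ j, (x i) ^ 2 * (y j) ^ 2)
  + a * ∑ i, ∑ k, ∑ j, (if i ≠ k then x i * x k * (y j) ^ 2 else 0)
  + b * ∑ i, ∑ j, ∑ l, (if j ≠ l then (x i) ^ 2 * y j * y l else 0)
  + c * ∑ i, ∑ k, ∑ j, ∑ l, (if i ≠ k ∧ j ≠ l then x i * y j * x k * y l else 0)

lemma offdiag_sum {m : ℕ} (x : Fin m → ℝ) :
    ∑ i, ∑ k, (if i ≠ k then x i * x k else 0)
      = (∑ i, x i) ^ 2 - ∑ i, x i ^ 2 := by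
  have h : ∀ i : Fin m, ∑ k, (if i ≠ k then x i * x k else 0)
      = x i * (∑ k, x k) - x i ^ 2 := by
    intro i
    have hpt : ∀ k : Fin m, (if i ≠ k then x i * x k else 0)
        = x i * x k - (if i = k then x i * x k else 0) := by
      intro k; by_cases h : i = k <;> simp [h]
    simp only [hpt]
    rw [Finset.sum_sub_distrib, Finset.sum_ite_eq, ← Finset.mul_sum]
    simp [sq]
  simp only [h]
  rw [Finset.sum_sub_distrib, ← Finset.sum_mul]
  ring

lemma monicForm_eq (m n : ℕ) (a b c : ℝ) (x : Fin m → ℝ) (y : Fin n → ℝ) :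
    monicForm m n a b c x y =
      (∑ i, x i ^ 2) * (∑ j, y j ^ 2)
      + a * (((∑ i, x i) ^ 2 - ∑ i, x i ^ 2) * (∑ j, y j ^ 2))
      + b * ((∑ i, x i ^ 2) * ((∑ j, y j) ^ 2 - ∑ j, y j ^ 2))
      + c * (((∑ i, x i) ^ 2 - ∑ i, x i ^ 2) * ((∑ j, y j) ^ 2 - ∑ j, y j ^ 2)) := by
  unfold monicForm
  rw [← offdiag_sum x, ← offdiag_sum y]
  have h1 : (∑ i, ∑ j, (x i) ^ 2 * (y j) ^ 2) = (∑ i, x i ^ 2) * (∑ j, y j ^ 2) := by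
    rw [Finset.sum_mul_sum]
  have h2 : (∑ i, ∑ k, ∑ j, (if i ≠ k then x i * x k * (y j) ^ 2 else 0))
      = (∑ i, ∑ k, (if i ≠ k then x i * x k else 0)) * (∑ j, y j ^ 2) := by
    simp only [Finset.sum_mul]
    refine Finset.sum_congr rfl fun i _ => Finset.sum_congr rfl fun k _ => ?_
    by_cases h : i = k <;> simp [h, Finset.mul_sum, mul_assoc]
  have h3 : (∑ i, ∑ j, ∑ l, (if j ≠ l then (x i) ^ 2 * y j * y l else 0))
      = (∑ i, x i ^ 2) * (∑ j, ∑ l, (if j ≠ l then y j * y l else 0)) := by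
    rw [Finset.sum_mul_sum]
    refine Finset.sum_congr rfl fun i _ => Finset.sum_congr rfl fun j _ => ?_
    rw [Finset.mul_sum]
    refine Finset.sum_congr rfl fun l _ => ?_
    by_cases h : j = l <;> simp [h, mul_assoc]
  have h4 : (∑ i, ∑ k, ∑ j, ∑ l, (if i ≠ k ∧ j ≠ l then x i * y j * x k * y l else 0))
      = (∑ i, ∑ k, (if i ≠ k then x i * x k else 0))
        * (∑ j, ∑ l, (if j ≠ l then y j * y l else 0)) := by
    simp only [Finset.sum_mul]
    refine Finset.sum_congr rfl fun i _ => Finset.sum_congr rfl fun k _ => ?_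
    simp only [Finset.mul_sum]
    refine Finset.sum_congr rfl fun j _ => Finset.sum_congr rfl fun l _ => ?_
    by_cases h : i = k <;> by_cases h' : j = l <;> simp [h, h'] <;> ring
  rw [h1, h2, h3, h4]

lemma sum_pair {m : ℕ} {i0 i1 : Fin m} (hne : i0 ≠ i1) (u v : ℝ) :
    ∑ i, (if i = i0 then u else if i = i1 then v else 0) = u + v := by
  have hpt : ∀ i : Fin m, (if i = i0 then u else if i = i1 then v else 0)
      = (if i = i0 then u else 0) + (if i = i1 then v else 0) := by
    intro i
    by_cases h1 : i = i0 <;> by_cases h2 : i = i1 <;> simp_all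
  simp only [hpt]
  rw [Finset.sum_add_distrib, Finset.sum_ite_eq', Finset.sum_ite_eq']
  simp

/-- PSD of a monic symmetric biquadratic form is equivalent to the four
linear inequalities. -/
theorem monic_symmetric_psd_iff_linear (m n : ℕ) (hm : 2 ≤ m) (hn : 2 ≤ n) (a b c : ℝ) :
    (∀ (x : Fin m → ℝ) (y : Fin n → ℝ), 0 ≤ monicForm m n a b c x y) ↔
      (1 - b + ((m : ℝ) - 1) * (a - c) ≥ 0 ∧
       1 - a + ((n : ℝ) - 1) * (b - c) ≥ 0 ∧
       1 - a - b + c ≥ 0 ∧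
       1 + ((m : ℝ) - 1) * a + ((n : ℝ) - 1) * b + ((m : ℝ) - 1) * ((n : ℝ) - 1) * c ≥ 0) := by
  have hm1 : (2:ℝ) ≤ (m:ℝ) := by exact_mod_cast hm
  have hn1 : (2:ℝ) ≤ (n:ℝ) := by exact_mod_cast hn
  have hM : (0:ℝ) < (m:ℝ) := by linarith
  have hN : (0:ℝ) < (n:ℝ) := by linarith
  constructor
  · intro h
    obtain ⟨i0,i1,hine⟩ : ∃ i0 i1 : Fin m, i0 ≠ i1 :=
      ⟨⟨0, by omega⟩, ⟨1, by omega⟩, by simp [Fin.ext_iff]⟩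
    obtain ⟨j0,j1,hjne⟩ : ∃ j0 j1 : Fin n, j0 ≠ j1 :=
      ⟨⟨0, by omega⟩, ⟨1, by omega⟩, by simp [Fin.ext_iff]⟩
    set xU : Fin m → ℝ := fun _ => 1 with hxU
    set yU : Fin n → ℝ := fun _ => 1 with hyU
    set xA : Fin m → ℝ := fun i => if i = i0 then 1 else if i = i1 then -1 else 0 with hxA
    set yA : Fin n → ℝ := fun j => if j = j0 then 1 else if j = j1 then -1 else 0 with hyA
    have hSxU : ∑ i, xU i = (m:ℝ) := by simp [hxU]
    have hQxU : ∑ i, xU i ^ 2 = (m:ℝ) := by simp [hxU]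
    have hSyU : ∑ j, yU j = (n:ℝ) := by simp [hyU]
    have hQyU : ∑ j, yU j ^ 2 = (n:ℝ) := by simp [hyU]
    have hSxA : ∑ i, xA i = 0 := by
      rw [hxA, sum_pair hine]; norm_num
    have hQxA : ∑ i, xA i ^ 2 = 2 := by
      have hpt : ∀ i : Fin m, xA i ^ 2 = (if i = i0 then (1:ℝ) else if i = i1 then 1 else 0) := by
        intro i; rw [hxA]; by_cases h1 : i = i0 <;> by_cases h2 : i = i1 <;>
          simp [h1, h2] <;> norm_num
      rw [Finset.sum_congr rfl fun i _ => hpt i, sum_pair hine]; norm_num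
    have hSyA : ∑ j, yA j = 0 := by
      rw [hyA, sum_pair hjne]; norm_num
    have hQyA : ∑ j, yA j ^ 2 = 2 := by
      have hpt : ∀ j : Fin n, yA j ^ 2 = (if j = j0 then (1:ℝ) else if j = j1 then 1 else 0) := by
        intro j; rw [hyA]; by_cases h1 : j = j0 <;> by_cases h2 : j = j1 <;>
          simp [h1, h2] <;> norm_num
      rw [Finset.sum_congr rfl fun j _ => hpt j, sum_pair hjne]; norm_num
    refine ⟨?_, ?_, ?_, ?_⟩
    · have hp := h xU yA
      rw [monicForm_eq, hSxU, hQxU, hSyA, hQyA] at hp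
      have h2 : 0 ≤ (2 * (m:ℝ)) * (1 - b + ((m:ℝ) - 1) * (a - c)) := by
        norm_num at hp; linarith [hp]
      have hpos : (0:ℝ) < 2 * (m:ℝ) := by linarith
      exact (mul_nonneg_iff_of_pos_left hpos).mp h2
    · have hp := h xA yU
      rw [monicForm_eq, hSxA, hQxA, hSyU, hQyU] at hp
      have h2 : 0 ≤ (2 * (n:ℝ)) * (1 - a + ((n:ℝ) - 1) * (b - c)) := by
        norm_num at hp; linarith [hp]
      have hpos : (0:ℝ) < 2 * (n:ℝ) := by linarith
      exact (mul_nonneg_iff_of_pos_left hpos).mp h2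
    · have hp := h xA yA
      rw [monicForm_eq, hSxA, hQxA, hSyA, hQyA] at hp
      have h2 : 0 ≤ (4:ℝ) * (1 - a - b + c) := by
        norm_num at hp; linarith [hp]
      have hpos : (0:ℝ) < (4:ℝ) := by norm_num
      exact (mul_nonneg_iff_of_pos_left hpos).mp h2
    · have hp := h xU yU
      rw [monicForm_eq, hSxU, hQxU, hSyU, hQyU] at hp
      have h2 : 0 ≤ ((m:ℝ) * (n:ℝ)) *
          (1 + ((m:ℝ) - 1) * a + ((n:ℝ) - 1) * b + ((m:ℝ) - 1) * ((n:ℝ) - 1) * c) := by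
        norm_num at hp; linarith [hp]
      have hpos : (0:ℝ) < (m:ℝ) * (n:ℝ) := mul_pos hM hN
      exact (mul_nonneg_iff_of_pos_left hpos).mp h2
  · rintro ⟨h1, h2, h3, h4⟩ x y
    rw [monicForm_eq]
    set S := ∑ i, x i with hS
    set Q := ∑ i, x i ^ 2 with hQdef
    set T := ∑ j, y j with hT
    set R := ∑ j, y j ^ 2 with hRdef
    have hQ : 0 ≤ Q := Finset.sum_nonneg fun i _ => sq_nonneg _
    have hR : 0 ≤ R := Finset.sum_nonneg fun j _ => sq_nonneg _
    have hu : S ^ 2 ≤ (m:ℝ) * Q := by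
      have := sq_sum_le_card_mul_sum_sq (s := (univ : Finset (Fin m))) (f := x)
      simpa [hS, hQdef] using this
    have hv : T ^ 2 ≤ (n:ℝ) * R := by
      have := sq_sum_le_card_mul_sum_sq (s := (univ : Finset (Fin n))) (f := y)
      simpa [hT, hRdef] using this
    rcases eq_or_lt_of_le hQ with hQ0 | hQ0
    · have hS0 : S ^ 2 = 0 := by
        have h' : S ^ 2 ≤ 0 := by rw [← hQ0] at hu; simpa using hu
        exact le_antisymm h' (sq_nonneg _)
      rw [← hQ0, hS0]; ring_nf; norm_num
    rcases eq_or_lt_of_le hR with hR0 | hR0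
    · have hT0 : T ^ 2 = 0 := by
        have h' : T ^ 2 ≤ 0 := by rw [← hR0] at hv; simpa using hv
        exact le_antisymm h' (sq_nonneg _)
      rw [← hR0, hT0]; ring_nf; norm_num
    have key : ((m:ℝ) * Q * ((n:ℝ) * R)) *
        (Q * R + a * ((S ^ 2 - Q) * R) + b * (Q * (T ^ 2 - R)) + c * ((S ^ 2 - Q) * (T ^ 2 - R)))
      = ((m:ℝ) * Q - S ^ 2) * ((n:ℝ) * R - T ^ 2) * (Q * R * (1 - a - b + c))
        + S ^ 2 * ((n:ℝ) * R - T ^ 2) * (Q * R * (1 - b + ((m:ℝ) - 1) * (a - c)))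
        + ((m:ℝ) * Q - S ^ 2) * T ^ 2 * (Q * R * (1 - a + ((n:ℝ) - 1) * (b - c)))
        + S ^ 2 * T ^ 2 * (Q * R *
            (1 + ((m:ℝ) - 1) * a + ((n:ℝ) - 1) * b + ((m:ℝ) - 1) * ((n:ℝ) - 1) * c)) := by
      ring
    have hQR : 0 ≤ Q * R := mul_nonneg hQ hR
    have hrhs : 0 ≤ ((m:ℝ) * Q - S ^ 2) * ((n:ℝ) * R - T ^ 2) * (Q * R * (1 - a - b + c))
        + S ^ 2 * ((n:ℝ) * R - T ^ 2) * (Q * R * (1 - b + ((m:ℝ) - 1) * (a - c)))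
        + ((m:ℝ) * Q - S ^ 2) * T ^ 2 * (Q * R * (1 - a + ((n:ℝ) - 1) * (b - c)))
        + S ^ 2 * T ^ 2 * (Q * R *
            (1 + ((m:ℝ) - 1) * a + ((n:ℝ) - 1) * b + ((m:ℝ) - 1) * ((n:ℝ) - 1) * c)) := by
      have w1 : 0 ≤ (m:ℝ) * Q - S ^ 2 := by linarith
      have w2 : 0 ≤ (n:ℝ) * R - T ^ 2 := by linarith
      have w3 : 0 ≤ S ^ 2 := sq_nonneg _
      have w4 : 0 ≤ T ^ 2 := sq_nonneg _
      have t1 := mul_nonneg (mul_nonneg w1 w2) (mul_nonneg hQR h3)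
      have t2 := mul_nonneg (mul_nonneg w3 w2) (mul_nonneg hQR h1)
      have t3 := mul_nonneg (mul_nonneg w1 w4) (mul_nonneg hQR h2)
      have t4 := mul_nonneg (mul_nonneg w3 w4) (mul_nonneg hQR h4)
      linarith
    rw [← key] at hrhs
    have hpos : (0:ℝ) < (m:ℝ) * Q * ((n:ℝ) * R) :=
      mul_pos (mul_pos hM hQ0) (mul_pos hN hR0)
    exact (mul_nonneg_iff_of_pos_left hpos).mp hrhs
end

section
/- Let m, n ≥ 2. The m×n monic symmetric biquadratic form with parameters (a,b,c) = (−1/(m−1), 1, −1/(m−1)) satisfies the identity P(x,y) = (1/(m−1)) ∑_{1≤i<k≤m} ((x_i − x_k) ∑_{j=1}^n y_j)² for all x ∈ ℝ^m, y ∈ ℝ^n; in particular it is a sum of squares of bilinear forms. -/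
open Finset

lemma offdiag {m : ℕ} (x : Fin m → ℝ) :
    ∑ i, ∑ k, (if i ≠ k then x i * x k else 0)
      = (∑ i, x i) ^ 2 - ∑ i, (x i) ^ 2 := by
  have h : ∀ i : Fin m, ∑ k, (if i ≠ k then x i * x k else 0)
      = (∑ k, x i * x k) - x i * x i := by
    intro i
    have hpt : ∀ k : Fin m, (if i ≠ k then x i * x k else 0)
        = x i * x k - (if i = k then x i * x k else 0) := by
      intro k; by_cases h : i = k <;> simp [h]
    rw [Finset.sum_congr rfl fun k _ => hpt k, Finset.sum_sub_distrib,
      Finset.sum_ite_eq Finset.univ i (fun k => x i * x k)]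
    simp
  simp only [h]
  rw [Finset.sum_sub_distrib, sq (∑ i, x i), Finset.sum_mul_sum]
  congr 1
  exact Finset.sum_congr rfl fun i _ => (sq (x i)).symm

/-- SOS decomposition of the vertex V₃ = (−1/(m−1), 1, −1/(m−1)). -/
theorem vertex_V3_identity (m n : ℕ) (hm : 2 ≤ m) (hn : 2 ≤ n)
    (x : Fin m → ℝ) (y : Fin n → ℝ) :
    monicForm m n (-(1 / ((m : ℝ) - 1))) 1 (-(1 / ((m : ℝ) - 1))) x y
      = (1 / ((m : ℝ) - 1)) *
          ∑ i, ∑ k, (if i < k then ((x i - x k) * ∑ j, y j) ^ 2 else 0) := by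
  simp only [monicForm]
  set S := ∑ i, x i with hS
  set Q := ∑ i, (x i) ^ 2 with hQ
  set T := ∑ j, y j with hT
  set R := ∑ j, (y j) ^ 2 with hR
  have hm1 : ((m : ℝ) - 1) ≠ 0 := by
    have : (2 : ℝ) ≤ (m : ℝ) := by exact_mod_cast hm
    linarith
  -- first term
  have h1 : (∑ i, ∑ j, (x i) ^ 2 * (y j) ^ 2) = Q * R := by
    rw [hQ, hR, Finset.sum_mul_sum]
  -- second term
  have h2 : (∑ i : Fin m, ∑ k : Fin m, ∑ j : Fin n,
      (if i ≠ k then x i * x k * (y j) ^ 2 else 0)) = (S ^ 2 - Q) * R := by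
    have hinner : ∀ i k : Fin m, (∑ j : Fin n,
        (if i ≠ k then x i * x k * (y j) ^ 2 else 0))
        = (if i ≠ k then x i * x k else 0) * R := by
      intro i k
      by_cases h : i = k
      · simp [h]
      · simp only [ne_eq, h, not_false_eq_true, if_true]
        rw [hR, Finset.mul_sum]
    calc (∑ i : Fin m, ∑ k : Fin m, ∑ j : Fin n,
        (if i ≠ k then x i * x k * (y j) ^ 2 else 0))
        = ∑ i : Fin m, ∑ k : Fin m, (if i ≠ k then x i * x k else 0) * R :=
          Finset.sum_congr rfl fun i _ =>
            Finset.sum_congr rfl fun k _ => hinner i k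
      _ = (∑ i : Fin m, ∑ k : Fin m, (if i ≠ k then x i * x k else 0)) * R := by
          rw [Finset.sum_mul]
          all_goals exact Finset.sum_congr rfl fun i _ => (Finset.sum_mul _ _ _).symm
      _ = (S ^ 2 - Q) * R := by rw [offdiag x]
  -- third term
  have h3 : (∑ i : Fin m, ∑ j : Fin n, ∑ l : Fin n,
      (if j ≠ l then (x i) ^ 2 * y j * y l else 0)) = Q * (T ^ 2 - R) := by
    have hinner : ∀ i : Fin m, (∑ j : Fin n, ∑ l : Fin n,
        (if j ≠ l then (x i) ^ 2 * y j * y l else 0))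
        = (x i) ^ 2 * (T ^ 2 - R) := by
      intro i
      rw [← offdiag y, Finset.mul_sum]
      refine Finset.sum_congr rfl fun j _ => ?_
      rw [Finset.mul_sum]
      refine Finset.sum_congr rfl fun l _ => ?_
      by_cases h : j = l
      · simp [h]
      · simp only [ne_eq, h, not_false_eq_true, if_true]
        ring
    rw [Finset.sum_congr rfl fun i _ => hinner i, ← Finset.sum_mul]
  -- fourth term
  have h4 : (∑ i : Fin m, ∑ k : Fin m, ∑ j : Fin n, ∑ l : Fin n,
      (if i ≠ k ∧ j ≠ l then x i * y j * x k * y l else 0))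
      = (S ^ 2 - Q) * (T ^ 2 - R) := by
    have hinner : ∀ i k : Fin m, (∑ j : Fin n, ∑ l : Fin n,
        (if i ≠ k ∧ j ≠ l then x i * y j * x k * y l else 0))
        = (if i ≠ k then x i * x k else 0) * (T ^ 2 - R) := by
      intro i k
      by_cases h : i = k
      · simp [h]
      · simp only [ne_eq, h, not_false_eq_true, if_true, true_and]
        rw [← offdiag y, Finset.mul_sum]
        refine Finset.sum_congr rfl fun j _ => ?_
        rw [Finset.mul_sum]
        refine Finset.sum_congr rfl fun l _ => ?_
        by_cases h' : j = l
        · simp [h']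
        · simp only [ne_eq, h', not_false_eq_true, if_true]
          ring
    calc (∑ i : Fin m, ∑ k : Fin m, ∑ j : Fin n, ∑ l : Fin n,
        (if i ≠ k ∧ j ≠ l then x i * y j * x k * y l else 0))
        = ∑ i : Fin m, ∑ k : Fin m, (if i ≠ k then x i * x k else 0) * (T ^ 2 - R) :=
          Finset.sum_congr rfl fun i _ =>
            Finset.sum_congr rfl fun k _ => hinner i k
      _ = (∑ i : Fin m, ∑ k : Fin m, (if i ≠ k then x i * x k else 0)) * (T ^ 2 - R) := by
          rw [Finset.sum_mul]
          all_goals exact Finset.sum_congr rfl fun i _ => (Finset.sum_mul _ _ _).symm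
      _ = (S ^ 2 - Q) * (T ^ 2 - R) := by rw [offdiag x]
  -- full (unrestricted) RHS sum
  have hfull : (∑ i : Fin m, ∑ k : Fin m, ((x i - x k) * T) ^ 2)
      = (2 * ((m : ℝ) * Q) - 2 * S ^ 2) * T ^ 2 := by
    have hstep : (∑ i : Fin m, ∑ k : Fin m, ((x i - x k) * T) ^ 2)
        = ∑ i : Fin m, ∑ k : Fin m,
            ((x i) ^ 2 * T ^ 2 - 2 * T ^ 2 * (x i * x k) + T ^ 2 * (x k) ^ 2) :=
      Finset.sum_congr rfl fun i _ => Finset.sum_congr rfl fun k _ => by ring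
    rw [hstep]
    simp only [Finset.sum_add_distrib, Finset.sum_sub_distrib, ← Finset.mul_sum,
      ← Finset.sum_mul, Finset.sum_const, Finset.card_univ, Fintype.card_fin,
      nsmul_eq_mul]
    rw [← hS, ← hQ]
    ring
  -- doubling trick for the strictly-triangular sum
  have hsw : (∑ i : Fin m, ∑ k : Fin m, (if i < k then ((x i - x k) * T) ^ 2 else 0))
      = ∑ i : Fin m, ∑ k : Fin m, (if k < i then ((x i - x k) * T) ^ 2 else 0) := by
    rw [Finset.sum_comm]
    refine Finset.sum_congr rfl fun i _ => Finset.sum_congr rfl fun k _ => ?_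
    by_cases h : k < i
    · simp only [h, if_true]; ring
    · simp [h]
  have hdouble : (2 : ℝ) * (∑ i : Fin m, ∑ k : Fin m,
      (if i < k then ((x i - x k) * T) ^ 2 else 0))
      = ∑ i : Fin m, ∑ k : Fin m, ((x i - x k) * T) ^ 2 := by
    have h2' : (2 : ℝ) * (∑ i : Fin m, ∑ k : Fin m,
        (if i < k then ((x i - x k) * T) ^ 2 else 0))
        = (∑ i : Fin m, ∑ k : Fin m, (if i < k then ((x i - x k) * T) ^ 2 else 0))
          + ∑ i : Fin m, ∑ k : Fin m, (if k < i then ((x i - x k) * T) ^ 2 else 0) := by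
      rw [← hsw]; ring
    rw [h2', ← Finset.sum_add_distrib]
    refine Finset.sum_congr rfl fun i _ => ?_
    rw [← Finset.sum_add_distrib]
    refine Finset.sum_congr rfl fun k _ => ?_
    rcases lt_trichotomy i k with h | h | h
    · simp [h, asymm h]
    · subst h; simp
    · simp [h, asymm h]
  have hB : (∑ i : Fin m, ∑ k : Fin m,
      (if i < k then ((x i - x k) * T) ^ 2 else 0))
      = ((m : ℝ) * Q - S ^ 2) * T ^ 2 := by
    linear_combination (hdouble.trans hfull) / 2
  rw [h1, h2, h3, h4, hB]
  field_simp
  ring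
end
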